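/- Fix integers n ≥ 2 and g ≥ 1. In the presented group H(n,g), the following identity holds: τ_1 = [ω_1,ω_2⁻¹][ω_3,ω_4⁻¹]⋯[ω_{2g−1},ω_{2g}⁻¹]·τ_{n−1}⁻¹τ_{n−2}⁻¹⋯τ_2⁻¹, where [x,y] := xyx⁻¹y⁻¹ (for n = 2 the trailing product τ_{n−1}⁻¹⋯τ_2⁻¹ is empty). In particular τ_1 lies in the subgroup generated by τ_2,…,τ_{n−1}, ω_1,…,ω_{2g}. -/
import Mathlib


/-- The generators of the presentation of the braid group of a closed orientable genus-`g`
surface: `s i` is `σ_{i+1}`, `a r` is `a_{r+1}`, `b r` is `b_{r+1}`. -/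
inductive HGen (n g : ℕ) : Type
  | s : Fin (n - 1) → HGen n g
  | a : Fin g → HGen n g
  | b : Fin g → HGen n g

/-- `σ_{i+1}` as an element of the free group. -/
def sg {n g : ℕ} (i : Fin (n - 1)) : FreeGroup (HGen n g) := FreeGroup.of (HGen.s i)

/-- `hgen true r = a_{r+1}` and `hgen false r = b_{r+1}`. -/
def hgen {n g : ℕ} (c : Bool) (r : Fin g) : FreeGroup (HGen n g) :=
  FreeGroup.of (if c then HGen.a r else HGen.b r)

/-- The full-twist word `Δ = σ_1 σ_2 ⋯ σ_{n-2} σ_{n-1}² σ_{n-2} ⋯ σ_2 σ_1`, written as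
`(σ_1 ⋯ σ_{n-1}) * (σ_{n-1} ⋯ σ_1)`. -/
def deltaWord (n g : ℕ) : FreeGroup (HGen n g) :=
  (List.ofFn fun i : Fin (n - 1) => sg i).prod *
    ((List.ofFn fun i : Fin (n - 1) => sg i).reverse).prod

/-- The word `[a_1, b_1⁻¹][a_2, b_2⁻¹] ⋯ [a_g, b_g⁻¹]`, where `[x, y] = x y x⁻¹ y⁻¹`. -/
def trWord (n g : ℕ) : FreeGroup (HGen n g) :=
  (List.ofFn fun t : Fin g =>
    hgen true t * (hgen false t)⁻¹ * (hgen true t)⁻¹ * hgen false t).prod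

/-- The relators of the presentation `H(n, g)` of the braid group on `n` strings of a
closed orientable surface of genus `g` (Theorem 1.2).  A relation `u = v` is encoded as
the relator `u * v⁻¹`; relations involving `σ_1` are guarded by `0 < n - 1`. -/
def hRels (n g : ℕ) : Set (FreeGroup (HGen n g)) :=
  {r | -- braid relations
      (∃ i j : Fin (n - 1), (i : ℕ) + 1 = (j : ℕ) ∧
        r = sg i * sg j * sg i * (sg j * sg i * sg j)⁻¹)
    ∨ (∃ i j : Fin (n - 1), ((i : ℕ) + 2 ≤ (j : ℕ) ∨ (j : ℕ) + 2 ≤ (i : ℕ)) ∧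
        r = sg i * sg j * (sg j * sg i)⁻¹)
    -- (R1)  a_r σ_i = σ_i a_r ,  b_r σ_i = σ_i b_r  (i ≠ 1)
    ∨ (∃ (c : Bool) (t : Fin g) (i : Fin (n - 1)), (i : ℕ) ≠ 0 ∧
        r = hgen c t * sg i * (sg i * hgen c t)⁻¹)
    -- (R2)  σ_1⁻¹ x σ_1⁻¹ x = x σ_1⁻¹ x σ_1⁻¹  for  x = a_r, b_r
    ∨ (∃ (h : 0 < n - 1) (c : Bool) (t : Fin g),
        r = (sg ⟨0, h⟩)⁻¹ * hgen c t * (sg ⟨0, h⟩)⁻¹ * hgen c t *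
          (hgen c t * (sg ⟨0, h⟩)⁻¹ * hgen c t * (sg ⟨0, h⟩)⁻¹)⁻¹)
    -- (R3)  σ_1⁻¹ x_s σ_1 y_r = y_r σ_1⁻¹ x_s σ_1  (s < r, x, y ∈ {a, b})
    ∨ (∃ (h : 0 < n - 1) (c d : Bool) (s t : Fin g), (s : ℕ) < (t : ℕ) ∧
        r = (sg ⟨0, h⟩)⁻¹ * hgen c s * sg ⟨0, h⟩ * hgen d t *
          (hgen d t * (sg ⟨0, h⟩)⁻¹ * hgen c s * sg ⟨0, h⟩)⁻¹)
    -- (R4)  σ_1⁻¹ a_r σ_1⁻¹ b_r = b_r σ_1⁻¹ a_r σ_1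
    ∨ (∃ (h : 0 < n - 1) (t : Fin g),
        r = (sg ⟨0, h⟩)⁻¹ * hgen true t * (sg ⟨0, h⟩)⁻¹ * hgen false t *
          (hgen false t * (sg ⟨0, h⟩)⁻¹ * hgen true t * sg ⟨0, h⟩)⁻¹)
    -- (TR)  [a_1, b_1⁻¹] ⋯ [a_g, b_g⁻¹] = Δ
    ∨ r = trWord n g * (deltaWord n g)⁻¹}

/-- The generator `σ_{i+1}` of `H(n,g)`. -/
def S {n g : ℕ} (i : Fin (n - 1)) : PresentedGroup (hRels n g) :=
  PresentedGroup.of (HGen.s i)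

/-- The generator `a_{r+1}` of `H(n,g)`. -/
def A {n g : ℕ} (r : Fin g) : PresentedGroup (hRels n g) :=
  PresentedGroup.of (HGen.a r)

/-- The generator `b_{r+1}` of `H(n,g)`. -/
def B {n g : ℕ} (r : Fin g) : PresentedGroup (hRels n g) :=
  PresentedGroup.of (HGen.b r)

/-- The descending product `σ_{n-1} σ_{n-2} ⋯ σ_{j+2}` (1-based indices). -/
def descProd {n g : ℕ} (j : Fin (n - 1)) : PresentedGroup (hRels n g) :=
  ((List.ofFn fun i : Fin (n - 1) => if (j : ℕ) < (i : ℕ) then S i else 1).reverse).prod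

/-- `τ_{j+1} = σ_{n-1} ⋯ σ_{j+2} σ_{j+1}² σ_{j+2}⁻¹ ⋯ σ_{n-1}⁻¹` (1-based indices). -/
def tau {n g : ℕ} (j : Fin (n - 1)) : PresentedGroup (hRels n g) :=
  descProd j * (S j) ^ 2 * (descProd j)⁻¹

/-- The ascending product `σ_1 σ_2 ⋯ σ_{n-1}`. -/
def uProd (n g : ℕ) : PresentedGroup (hRels n g) :=
  (List.ofFn fun i : Fin (n - 1) => S i).prod

/-- `ω_{2r-1} = σ_{n-1}⁻¹ ⋯ σ_1⁻¹ a_r σ_1 ⋯ σ_{n-1}` (1-based index `r`). -/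
def omegaA {n g : ℕ} (r : Fin g) : PresentedGroup (hRels n g) :=
  (uProd n g)⁻¹ * A r * uProd n g

/-- `ω_{2r} = σ_{n-1}⁻¹ ⋯ σ_1⁻¹ b_r σ_1 ⋯ σ_{n-1}` (1-based index `r`). -/
def omegaB {n g : ℕ} (r : Fin g) : PresentedGroup (hRels n g) :=
  (uProd n g)⁻¹ * B r * uProd n g

/-- The product `[ω_1, ω_2⁻¹][ω_3, ω_4⁻¹] ⋯ [ω_{2g-1}, ω_{2g}⁻¹]`,
where `[x, y] = x y x⁻¹ y⁻¹`. -/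
def commProd (n g : ℕ) : PresentedGroup (hRels n g) :=
  (List.ofFn fun r : Fin g =>
    omegaA r * (omegaB r)⁻¹ * (omegaA r)⁻¹ * omegaB r).prod

/-- The product `τ_{n-1}⁻¹ τ_{n-2}⁻¹ ⋯ τ_2⁻¹` (empty for `n = 2`). -/
def tauTail (n g : ℕ) : PresentedGroup (hRels n g) :=
  ((List.ofFn fun j : Fin (n - 1) => if 0 < (j : ℕ) then (tau j)⁻¹ else 1).reverse).prod


section TauHelpers

variable {G : Type*} [Group G]

private lemma conj_ofFn_prod {k : ℕ} (c : G) (w : Fin k → G) :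
    (List.ofFn fun t => c * w t * c⁻¹).prod = c * (List.ofFn w).prod * c⁻¹ := by
  induction k with
  | zero => simp
  | succ k ih =>
    rw [List.ofFn_succ, List.ofFn_succ, List.prod_cons, List.prod_cons, ih]
    group

/-- Abstract version of `descProd`. -/
private def Dl {m : ℕ} (f : Fin m → G) (j : Fin m) : G :=
  ((List.ofFn fun i => if (j : ℕ) < (i : ℕ) then f i else 1).reverse).prod

/-- Abstract version of `tau`. -/
private def Tl {m : ℕ} (f : Fin m → G) (j : Fin m) : G :=
  Dl f j * f j ^ 2 * (Dl f j)⁻¹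

private lemma Dl_last {k : ℕ} (f : Fin (k + 1) → G) : Dl f (Fin.last k) = 1 := by
  unfold Dl
  have h1 : ∀ i : Fin (k + 1), ¬ ((Fin.last k : ℕ) < (i : ℕ)) := fun i => by
    have := i.isLt; simp only [Fin.val_last]; omega
  refine List.prod_eq_one ?_
  intro x hx
  rw [List.mem_reverse, List.mem_ofFn] at hx
  obtain ⟨i, rfl⟩ := hx
  exact if_neg (h1 i)

private lemma Tl_last {k : ℕ} (f : Fin (k + 1) → G) :
    Tl f (Fin.last k) = f (Fin.last k) ^ 2 := by
  unfold Tl; rw [Dl_last]; group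

private lemma Dl_castSucc {k : ℕ} (f : Fin (k + 1) → G) (j : Fin k) :
    Dl f (Fin.castSucc j) = f (Fin.last k) * Dl (fun i => f (Fin.castSucc i)) j := by
  unfold Dl
  rw [List.ofFn_succ']
  have h1 : ((Fin.castSucc j : ℕ) < (Fin.last k : ℕ)) := by
    simp only [Fin.coe_castSucc, Fin.val_last]; exact j.isLt
  simp [List.reverse_concat, List.prod_cons, h1, Fin.coe_castSucc]

private lemma Tl_castSucc {k : ℕ} (f : Fin (k + 1) → G) (j : Fin k) :
    Tl f (Fin.castSucc j)
      = f (Fin.last k) * Tl (fun i => f (Fin.castSucc i)) j * (f (Fin.last k))⁻¹ := by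
  unfold Tl
  rw [Dl_castSucc]
  simp only []
  group

private lemma key_tau : ∀ {m : ℕ} (f : Fin m → G),
    (List.ofFn (Tl f)).prod = ((List.ofFn f).reverse).prod * (List.ofFn f).prod := by
  intro m
  induction m with
  | zero => intro f; simp
  | succ k ih =>
    intro f
    rw [List.ofFn_succ' (Tl f), List.prod_concat, Tl_last]
    have hT : (fun i : Fin k => Tl f (Fin.castSucc i))
        = fun i => f (Fin.last k) * Tl (fun i => f (Fin.castSucc i)) i * (f (Fin.last k))⁻¹ := by
      funext i; exact Tl_castSucc f i
    rw [hT, conj_ofFn_prod, ih, List.ofFn_succ' f]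
    simp only [List.concat_eq_append, List.reverse_append, List.reverse_singleton,
      List.singleton_append, List.prod_cons, List.prod_append, List.prod_singleton, List.prod_nil]
    group

private lemma prod_ofFn_head {m : ℕ} (h : 0 < m) (f : Fin m → G) :
    (List.ofFn f).prod
      = f ⟨0, h⟩ * (List.ofFn fun j => if 0 < (j : ℕ) then f j else 1).prod := by
  cases m with
  | zero => exact absurd h (lt_irrefl 0)
  | succ k =>
    rw [List.ofFn_succ, List.ofFn_succ, List.prod_cons, List.prod_cons]
    simp

end TauHelpers

/-- **In `H(n,g)` the element `τ_1` satisfies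
`τ_1 = [ω_1, ω_2⁻¹] ⋯ [ω_{2g-1}, ω_{2g}⁻¹] τ_{n-1}⁻¹ ⋯ τ_2⁻¹`; in particular it lies in
the subgroup generated by `τ_2, …, τ_{n-1}, ω_1, …, ω_{2g}`.** -/
theorem tau_one_eq (n g : ℕ) (hn : 2 ≤ n) (hg : 1 ≤ g) (h : 0 < n - 1) :
    tau (⟨0, h⟩ : Fin (n - 1)) = commProd n g * tauTail n g ∧
    tau (⟨0, h⟩ : Fin (n - 1)) ∈
      Subgroup.closure
        ({y : PresentedGroup (hRels n g) | ∃ j : Fin (n - 1), 0 < (j : ℕ) ∧ y = tau j} ∪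
          Set.range (omegaA : Fin g → PresentedGroup (hRels n g)) ∪
          Set.range (omegaB : Fin g → PresentedGroup (hRels n g))) := by
    classical
  have hmem : trWord n g * (deltaWord n g)⁻¹ ∈ Subgroup.normalClosure (hRels n g) :=
    Subgroup.subset_normalClosure
      (Or.inr (Or.inr (Or.inr (Or.inr (Or.inr (Or.inr rfl))))))
  have h1 : PresentedGroup.mk (hRels n g) (trWord n g * (deltaWord n g)⁻¹) = 1 :=
    (QuotientGroup.eq_one_iff _).mpr hmem
  rw [map_mul, map_inv, mul_inv_eq_one] at h1
  have hT : PresentedGroup.mk (hRels n g) (trWord n g)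
      = (List.ofFn fun t : Fin g => A t * (B t)⁻¹ * (A t)⁻¹ * B t).prod := by
    unfold trWord
    rw [map_list_prod, List.map_ofFn]
    rfl
  have hD : PresentedGroup.mk (hRels n g) (deltaWord n g)
      = uProd n g * ((List.ofFn fun i : Fin (n - 1) => S i).reverse).prod := by
    unfold deltaWord uProd
    rw [map_mul, map_list_prod, map_list_prod, List.map_reverse, List.map_ofFn]
    rfl
  have hterm : ∀ t : Fin g, omegaA t * (omegaB t)⁻¹ * (omegaA t)⁻¹ * omegaB t
      = (uProd n g)⁻¹ * (A t * (B t)⁻¹ * (A t)⁻¹ * B t) * ((uProd n g)⁻¹)⁻¹ := by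
    intro t; unfold omegaA omegaB; group
  have hC : commProd n g
      = ((List.ofFn fun i : Fin (n - 1) => S i).reverse).prod * uProd n g := by
    unfold commProd
    simp only [hterm]
    rw [conj_ofFn_prod, ← hT, h1, hD]
    group
  have htau : (List.ofFn (tau (n := n) (g := g))).prod
      = ((List.ofFn fun i : Fin (n - 1) => S i).reverse).prod * uProd n g :=
    key_tau S
  have hfun : (fun j : Fin (n - 1) => if 0 < (j : ℕ) then (tau (n := n) (g := g) j)⁻¹ else 1)
      = ((fun x => x⁻¹) ∘ fun j : Fin (n - 1) => if 0 < (j : ℕ) then tau j else 1) := by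
    funext j; by_cases hj : 0 < (j : ℕ) <;> simp [hj]
  have htail : tauTail n g
      = ((List.ofFn fun j : Fin (n - 1) => if 0 < (j : ℕ) then tau j else 1).prod)⁻¹ := by
    unfold tauTail
    rw [hfun, ← List.map_ofFn, ← List.prod_inv_reverse]
  have hmain : tau (⟨0, h⟩ : Fin (n - 1)) = commProd n g * tauTail n g := by
    rw [hC, htail]
    refine eq_mul_inv_of_mul_eq ?_
    rw [← prod_ofFn_head h (tau (n := n) (g := g))]
    exact htau
  refine ⟨hmain, ?_⟩
  rw [hmain]
  refine Subgroup.mul_mem _ ?_ ?_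
  · unfold commProd
    refine Subgroup.list_prod_mem _ ?_
    intro x hx
    rw [List.mem_ofFn] at hx
    obtain ⟨t, rfl⟩ := hx
    have hA : omegaA t ∈ Subgroup.closure
        ({y : PresentedGroup (hRels n g) | ∃ j : Fin (n - 1), 0 < (j : ℕ) ∧ y = tau j} ∪
          Set.range (omegaA : Fin g → PresentedGroup (hRels n g)) ∪
          Set.range (omegaB : Fin g → PresentedGroup (hRels n g))) :=
      Subgroup.subset_closure (Set.mem_union_left _ (Set.mem_union_right _ ⟨t, rfl⟩))
    have hB : omegaB t ∈ Subgroup.closure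
        ({y : PresentedGroup (hRels n g) | ∃ j : Fin (n - 1), 0 < (j : ℕ) ∧ y = tau j} ∪
          Set.range (omegaA : Fin g → PresentedGroup (hRels n g)) ∪
          Set.range (omegaB : Fin g → PresentedGroup (hRels n g))) :=
      Subgroup.subset_closure (Set.mem_union_right _ ⟨t, rfl⟩)
    exact Subgroup.mul_mem _
      (Subgroup.mul_mem _ (Subgroup.mul_mem _ hA (Subgroup.inv_mem _ hB))
        (Subgroup.inv_mem _ hA)) hB
  · unfold tauTail
    refine Subgroup.list_prod_mem _ ?_
    intro x hx
    rw [List.mem_reverse, List.mem_ofFn] at hx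
    obtain ⟨j, rfl⟩ := hx
    show (if 0 < (j : ℕ) then (tau (n := n) (g := g) j)⁻¹ else 1) ∈ _
    by_cases hj : 0 < (j : ℕ)
    · rw [if_pos hj]
      exact Subgroup.inv_mem _
        (Subgroup.subset_closure (Set.mem_union_left _ (Set.mem_union_left _ ⟨j, hj, rfl⟩)))
    · rw [if_neg hj]
      exact Subgroup.one_mem _
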